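/- arXiv:0803.4184 — 3 statements merged into one kernel-verified Lean document; each statement's English description precedes it below -/
import Mathlib

section
/- If a real number x satisfies sin x ≠ 0, cos x ≠ 0, and sin x + cos x + tan x + cot x + sec x + csc x = −3, then sin x + cos x = −1 + √2. -/
theorem stmt6 (x : ℝ) (hs : Real.sin x ≠ 0) (hc : Real.cos x ≠ 0)
    (h : Real.sin x + Real.cos x + Real.tan x + Real.cos x / Real.sin x +
      1 / Real.cos x + 1 / Real.sin x = -3) :
    Real.sin x + Real.cos x = -1 + Real.sqrt 2 := by
  set a := Real.sin x with ha
  set b := Real.cos x with hb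
  have pyth : a ^ 2 + b ^ 2 = 1 := by
    rw [ha, hb]; exact Real.sin_sq_add_cos_sq x
  rw [Real.tan_eq_sin_div_cos, ← ha, ← hb] at h
  have keyab : a * b * ((a + b + 1) * ((a + b) ^ 2 + 2 * (a + b) - 1)) = 0 := by
    field_simp at h
    linear_combination 2 * a * b * h + a * b * (a + b + 1) * pyth
  have key : (a + b + 1) * ((a + b) ^ 2 + 2 * (a + b) - 1) = 0 := by
    rcases mul_eq_zero.mp keyab with h' | h'
    · exact absurd h' (mul_ne_zero hs hc)
    · exact h'
  have hs2 : Real.sqrt 2 ^ 2 = 2 := Real.sq_sqrt (by norm_num)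
  have habs : (a + b) ^ 2 ≤ 2 := by nlinarith [sq_nonneg (a - b)]
  have hsqrt : (1:ℝ) < Real.sqrt 2 := by
    nlinarith [Real.sqrt_nonneg 2]
  rcases mul_eq_zero.mp key with h1 | h2
  · -- a + b = -1 forces a*b = 0, contradiction
    exfalso
    have hab : a + b = -1 := by linarith
    have : a * b = 0 := by nlinarith
    rcases mul_eq_zero.mp this with h' | h'
    · exact hs h'
    · exact hc h'
  · -- (a+b+1)^2 = 2, and a+b+1 > -√2
    have h3 : (a + b + 1) ^ 2 = Real.sqrt 2 ^ 2 := by rw [hs2]; nlinarith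
    have h4 : (a + b + 1 - Real.sqrt 2) * (a + b + 1 + Real.sqrt 2) = 0 := by
      nlinarith
    rcases mul_eq_zero.mp h4 with h5 | h5
    · linarith
    · exfalso; nlinarith
end

section
/- If x is a real number with sin x ≠ 0 and cos x ≠ 0, and n is a real number such that sin x + cos x + tan x + cot x + sec x + csc x = n, then setting S = sin x + cos x and m = −n, we have S³ + m·S² + S + (2 − m) = 0. -/
theorem stmt8 (x : ℝ) (hs : Real.sin x ≠ 0) (hc : Real.cos x ≠ 0) (n : ℝ)
    (h : Real.sin x + Real.cos x + Real.tan x + Real.cos x / Real.sin x +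
      1 / Real.cos x + 1 / Real.sin x = n)
    (S m : ℝ) (hS : S = Real.sin x + Real.cos x) (hm : m = -n) :
    S ^ 3 + m * S ^ 2 + S + (2 - m) = 0 := by
  have hpy := Real.sin_sq_add_cos_sq x
  rw [Real.tan_eq_sin_div_cos] at h
  field_simp at h
  subst hS hm
  set s := Real.sin x
  set c := Real.cos x
  have key : s * c * ((s + c) ^ 3 + -n * (s + c) ^ 2 + (s + c) + (2 - -n)) = 0 := by
    linear_combination ((s + c) ^ 2 - 1) * h - (2 * s * c + s ^ 2 + c ^ 2 + s + c) * hpy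
  rcases mul_eq_zero.mp key with h0 | h0
  · exact absurd h0 (mul_ne_zero hs hc)
  · exact h0
end

section
/- There is no real number x with sin x ≠ 0 and cos x ≠ 0 such that sin x + cos x + tan x + cot x + sec x + csc x = n, for any integer n with −1 ≤ n ≤ 6. -/
set_option maxHeartbeats 1000000

theorem stmt19 (n : ℤ) (h1 : -1 ≤ n) (h2 : n ≤ 6) :
    ¬ ∃ x : ℝ, Real.sin x ≠ 0 ∧ Real.cos x ≠ 0 ∧
      Real.sin x + Real.cos x + Real.tan x + Real.cos x / Real.sin x +
        1 / Real.cos x + 1 / Real.sin x = n := by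
  rintro ⟨x, hs, hc, heq⟩
  rw [Real.tan_eq_sin_div_cos] at heq
  set s := Real.sin x with hsdef
  set c := Real.cos x with hcdef
  have hpy : s ^ 2 + c ^ 2 = 1 := Real.sin_sq_add_cos_sq x
  have hsc : s * c ≠ 0 := mul_ne_zero hs hc
  have hu2 : (s + c) ^ 2 ≤ 2 := by nlinarith [sq_nonneg (s - c)]
  have hp : 2 * (s * c) = (s + c) ^ 2 - 1 := by linear_combination -hpy
  have key : (s + c) * (s * c) + (s + c) + 1 = n * (s * c) := by
    field_simp at heq
    apply mul_right_cancel₀ hsc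
    linear_combination (s * c) * heq - (s * c) * hpy
  have hune : s + c ≠ -1 := by
    intro h
    apply hsc
    have h0 : 2 * (s * c) = 0 := by rw [hp, h]; ring
    linarith
  have hquad : (s + c) ^ 2 - (n + 1) * (s + c) + (n + 2) = 0 := by
    have h3 : ((s + c) + 1) * ((s + c) ^ 2 - (n + 1) * (s + c) + (n + 2)) = 0 := by
      linear_combination 2 * key - ((s + c) - n) * hp
    have h4 : (s + c) + 1 ≠ 0 := fun h => hune (by linarith)
    exact (mul_eq_zero.mp h3).resolve_left h4
  interval_cases n <;> push_cast at hquad <;>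
    nlinarith [hquad, hu2, sq_nonneg (s + c), sq_nonneg ((s + c) ^ 2 - 2),
      sq_nonneg (7 * (s + c) - 10), sq_nonneg ((s + c) - 1), sq_nonneg ((s + c) + 1)]
end
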